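/- Let N ≥ 1, let Q ∈ ℂ^{N×N} be unitary with columns ξ₁, …, ξ_N, let Λ = diag(λ₁, …, λ_N), set A = Q Λ Q*, and let B, H ∈ ℂ^{N×N}. Let V ⊆ {1, …, N}, let t ∈ ℂ^N be supported in V, and set φ = Q t. Suppose additionally that φ is an eigenvector of the smoothing error propagation matrix: (I − B A) φ = σ φ for some σ ∈ ℂ. Then for every integer M ≥ 0, ‖(I − H A)(I − B A)^M φ‖₂ ≤ |σ|^M (∑_{i∈V} ‖l_i‖₂²)^{1/2} ‖φ‖₂, where l_i = ξ_i − H(λ_i ξ_i). -/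

import Mathlib

/-!
Since `φ` is an eigenvector of the smoother, the `M` smoothing steps only scale it by `σ^M`.
Writing `φ = Q t = ∑_{i ∈ V} t_i ξ_i` and using `A ξ_i = λ_i ξ_i`, the correction step maps
`φ` to `∑_{i ∈ V} t_i l_i`; Cauchy–Schwarz bounds its norm by `(∑_{i ∈ V} ‖l_i‖²)^{1/2} ‖t‖`,
and `‖t‖ = ‖φ‖` because `Q` is unitary.
-/

open Matrix

/-- The Euclidean (ℓ²) norm on ℂ^N. -/
noncomputable def l2norm {N : ℕ} (x : Fin N → ℂ) : ℝ :=
  Real.sqrt (∑ i, ‖x i‖ ^ 2)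

theorem norm_sum_smul_le_sqrt_mul_sqrt {ι 𝕜 E : Type*} [NormedField 𝕜]
    [SeminormedAddCommGroup E] [NormedSpace 𝕜 E] (s : Finset ι) (c : ι → 𝕜) (x : ι → E) :
    ‖∑ i ∈ s, c i • x i‖ ≤ √(∑ i ∈ s, ‖c i‖ ^ 2) * √(∑ i ∈ s, ‖x i‖ ^ 2) :=
  calc ‖∑ i ∈ s, c i • x i‖ ≤ ∑ i ∈ s, ‖c i‖ * ‖x i‖ :=
        (norm_sum_le _ _).trans_eq (by simp_rw [norm_smul])
    _ ≤ _ := Real.sum_mul_le_sqrt_mul_sqrt s _ _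

section MatrixAlgebra

variable {n R : Type*} [Fintype n]

theorem Matrix.mulVec_eq_sum_smul_col [CommSemiring R] (Q : Matrix n n R) (t : n → R) :
    Q *ᵥ t = ∑ i, t i • fun k => Q k i := by
  ext k
  simp [mulVec, dotProduct, mul_comm]

variable [DecidableEq n]

theorem Matrix.pow_mulVec_of_mulVec_eq_smul [CommSemiring R]
    {C : Matrix n n R} {v : n → R} {σ : R} (h : C *ᵥ v = σ • v) (m : ℕ) :
    (C ^ m) *ᵥ v = σ ^ m • v := by
  induction m with
  | zero => simp
  | succ m ih =>
    rw [pow_succ, ← mulVec_mulVec, h, mulVec_smul, ih, smul_smul, ← pow_succ']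

theorem Matrix.eigenbasis_mulVec [CommSemiring R] [Star R] {Q : Matrix n n R}
    (hQ : Qᴴ * Q = 1) (lam t : n → R) :
    (Q * diagonal lam * Qᴴ) *ᵥ (Q *ᵥ t) = Q *ᵥ (lam * t) := by
  rw [mulVec_mulVec, mul_assoc, mul_assoc, hQ, mul_one, ← mulVec_mulVec]
  congr 1
  ext i
  simp [mulVec_diagonal]

theorem Matrix.one_sub_mul_eigenbasis_mulVec [CommRing R] [Star R] {Q : Matrix n n R}
    (hQ : Qᴴ * Q = 1) (lam t : n → R) (H : Matrix n n R) :
    (1 - H * (Q * diagonal lam * Qᴴ)) *ᵥ (Q *ᵥ t) =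
      ∑ i, t i • ((fun k => Q k i) - H *ᵥ (lam i • fun k => Q k i)) := by
  rw [sub_mulVec, one_mulVec, ← mulVec_mulVec, eigenbasis_mulVec hQ,
    mulVec_eq_sum_smul_col Q t, mulVec_eq_sum_smul_col Q (lam * t), mulVec_sum,
    ← Finset.sum_sub_distrib]
  refine Finset.sum_congr rfl fun i _ => ?_
  rw [Pi.mul_apply, mul_comm, mul_smul, mulVec_smul, smul_sub]

end MatrixAlgebra

theorem l2norm_eq_norm_toLp {N : ℕ} (x : Fin N → ℂ) : l2norm x = ‖WithLp.toLp 2 x‖ := by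
  rw [EuclideanSpace.norm_eq]; rfl

theorem l2norm_smul {N : ℕ} (c : ℂ) (x : Fin N → ℂ) : l2norm (c • x) = ‖c‖ * l2norm x := by
  rw [l2norm_eq_norm_toLp, l2norm_eq_norm_toLp, WithLp.toLp_smul, norm_smul]

theorem l2norm_unitary_mulVec {N : ℕ} {Q : Matrix (Fin N) (Fin N) ℂ}
    (hQ : Q ∈ unitaryGroup (Fin N) ℂ) (t : Fin N → ℂ) : l2norm (Q *ᵥ t) = l2norm t := by
  have hQQ : Qᴴ * Q = 1 := mem_unitaryGroup_iff'.mp hQ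
  have hinner : inner ℂ (WithLp.toLp 2 (Q *ᵥ t)) (WithLp.toLp 2 (Q *ᵥ t)) =
      inner ℂ (WithLp.toLp 2 t) (WithLp.toLp 2 t) := by
    rw [EuclideanSpace.inner_toLp_toLp, EuclideanSpace.inner_toLp_toLp, star_mulVec,
      dotProduct_comm, dotProduct_mulVec, vecMul_vecMul, hQQ,
      vecMul_one, dotProduct_comm]
  rw [l2norm_eq_norm_toLp, l2norm_eq_norm_toLp, norm_eq_sqrt_re_inner (𝕜 := ℂ), hinner,
    ← norm_eq_sqrt_re_inner]

theorem l2norm_finset_sum_smul_le {N : ℕ} {ι : Type*} (s : Finset ι) (c : ι → ℂ)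
    (x : ι → Fin N → ℂ) :
    l2norm (∑ i ∈ s, c i • x i) ≤ √(∑ i ∈ s, ‖c i‖ ^ 2) * √(∑ i ∈ s, l2norm (x i) ^ 2) := by
  simp only [l2norm_eq_norm_toLp, WithLp.toLp_sum, WithLp.toLp_smul]
  exact norm_sum_smul_le_sqrt_mul_sqrt s c _

theorem sqrt_sum_norm_sq_le_l2norm {N : ℕ} (V : Finset (Fin N)) (t : Fin N → ℂ) :
    √(∑ i ∈ V, ‖t i‖ ^ 2) ≤ l2norm t :=
  Real.sqrt_le_sqrt <| Finset.sum_le_sum_of_subset_of_nonneg (Finset.subset_univ V)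
    fun _ _ _ => sq_nonneg _

theorem hybrid_step_per_frequency_estimate_general
    {N : ℕ}
    (Q : Matrix (Fin N) (Fin N) ℂ) (hQ : Q ∈ Matrix.unitaryGroup (Fin N) ℂ)
    (lam : Fin N → ℂ)
    (A B H : Matrix (Fin N) (Fin N) ℂ)
    (hA : A = Q * Matrix.diagonal lam * Qᴴ)
    (l : Fin N → Fin N → ℂ)
    (hl : ∀ i : Fin N, l i = (fun k => Q k i) - H.mulVec (lam i • fun k => Q k i))
    (V : Finset (Fin N)) (t : Fin N → ℂ) (ht : ∀ i ∉ V, t i = 0)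
    (φ : Fin N → ℂ) (hφ : φ = Q.mulVec t)
    (σ : ℂ) (hσ : (1 - B * A).mulVec φ = σ • φ)
    (M : ℕ) :
    l2norm (((1 - H * A) * (1 - B * A) ^ M).mulVec φ) ≤
      ‖σ‖ ^ M * Real.sqrt (∑ i ∈ V, (l2norm (l i)) ^ 2) * l2norm φ := by
  have hsmooth : ((1 - H * A) * (1 - B * A) ^ M) *ᵥ φ = σ ^ M • ((1 - H * A) *ᵥ φ) := by
    rw [← mulVec_mulVec, pow_mulVec_of_mulVec_eq_smul hσ, mulVec_smul]
  have hcorrect : (1 - H * A) *ᵥ φ = ∑ i ∈ V, t i • l i := by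
    rw [hA, hφ, one_sub_mul_eigenbasis_mulVec (mem_unitaryGroup_iff'.mp hQ)]
    simp_rw [← hl]
    exact (Finset.sum_subset (Finset.subset_univ V) fun i _ hi => by simp [ht i hi]).symm
  rw [hsmooth, l2norm_smul, norm_pow, hcorrect, mul_assoc, hφ, l2norm_unitary_mulVec hQ]
  gcongr
  calc l2norm (∑ i ∈ V, t i • l i)
      ≤ √(∑ i ∈ V, ‖t i‖ ^ 2) * √(∑ i ∈ V, l2norm (l i) ^ 2) := l2norm_finset_sum_smul_le V t l
    _ ≤ l2norm t * √(∑ i ∈ V, l2norm (l i) ^ 2) := by gcongr; exact sqrt_sum_norm_sq_le_l2norm V t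
    _ = _ := mul_comm _ _

/-- **Per-frequency contraction of one hybrid step.**
Let `A = Q Λ Q*` with `Q` unitary (columns `ξ_i`), `Λ = diag(λ_i)`, and
`l_i = ξ_i − H (λ_i ξ_i)`. If `φ = Q t` with `t` supported in `V` and `φ` is an eigenvector
of the smoothing error propagation matrix, `(I − B A) φ = σ φ`, then for every `M ≥ 0`:
`‖(I − H A)(I − B A)^M φ‖₂ ≤ |σ|^M (∑_{i ∈ V} ‖l_i‖₂²)^{1/2} ‖φ‖₂`. -/
theorem hybrid_step_per_frequency_estimate
    {N : ℕ} (hN : 1 ≤ N)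
    (Q : Matrix (Fin N) (Fin N) ℂ) (hQ : Q ∈ Matrix.unitaryGroup (Fin N) ℂ)
    (lam : Fin N → ℂ)
    (A B H : Matrix (Fin N) (Fin N) ℂ)
    (hA : A = Q * Matrix.diagonal lam * Qᴴ)
    (l : Fin N → Fin N → ℂ)
    (hl : ∀ i : Fin N, l i = (fun k => Q k i) - H.mulVec (lam i • fun k => Q k i))
    (V : Finset (Fin N)) (t : Fin N → ℂ) (ht : ∀ i ∉ V, t i = 0)
    (φ : Fin N → ℂ) (hφ : φ = Q.mulVec t)
    (σ : ℂ) (hσ : (1 - B * A).mulVec φ = σ • φ)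
    (M : ℕ) :
    l2norm (((1 - H * A) * (1 - B * A) ^ M).mulVec φ) ≤
      ‖σ‖ ^ M * Real.sqrt (∑ i ∈ V, (l2norm (l i)) ^ 2) * l2norm φ :=
  hybrid_step_per_frequency_estimate_general Q hQ lam A B H hA l hl V t ht φ hφ σ hσ M
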